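/- arXiv:2108.13708 — 4 statements merged into one kernel-verified Lean document; each statement's English description precedes it below -/
import Mathlib

section
/- Let g : [0,∞) → ℂ be measurable and suppose that the function k ↦ g(|k|)/|k|² is Lebesgue integrable on ℝ², where |k| denotes the Euclidean norm of k = (k₀,k₁). Then ∫_{ℝ²} g(|k|) / (−i k₀ + k₁)² dk = 0. -/
open MeasureTheory

/-- The Euclidean norm on `ℝ²` (realized as `ℝ × ℝ`). -/
noncomputable def euclNorm (k : ℝ × ℝ) : ℝ :=
  Real.sqrt (k.1 ^ 2 + k.2 ^ 2)

/-- Rotation by `π/2` as a measurable equivalence of `ℝ × ℝ`. -/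
def rotEquiv : (ℝ × ℝ) ≃ᵐ (ℝ × ℝ) where
  toEquiv :=
    { toFun := fun k => (k.2, -k.1)
      invFun := fun k => (-k.2, k.1)
      left_inv := fun k => by simp
      right_inv := fun k => by simp }
  measurable_toFun := by measurability
  measurable_invFun := by measurability

lemma rot_measurePreserving :
    MeasurePreserving (fun k : ℝ × ℝ => (k.2, -k.1)) volume volume := by
  rw [Measure.volume_eq_prod]
  have h1 : MeasurePreserving (Prod.swap : ℝ × ℝ → ℝ × ℝ)
      ((volume : Measure ℝ).prod volume) ((volume : Measure ℝ).prod volume) :=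
    Measure.measurePreserving_swap
  have h2 : MeasurePreserving (Prod.map (id : ℝ → ℝ) (fun x : ℝ => -x))
      ((volume : Measure ℝ).prod volume) ((volume : Measure ℝ).prod volume) :=
    (MeasurePreserving.id _).prod (Measure.measurePreserving_neg _)
  exact h2.comp h1

/-- Rotation-symmetry cancellation: for a measurable radial weight `g` with
`k ↦ g(|k|)/|k|²` integrable on `ℝ²`, the integral of `g(|k|)/(−ik₀+k₁)²` vanishes. -/
theorem radial_against_chiral_square_vanishes
    (g : ℝ → ℂ) (hg : Measurable g)
    (hint : Integrable (fun k : ℝ × ℝ => g (euclNorm k) / ((euclNorm k ^ 2 : ℝ) : ℂ))) :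
    ∫ k : ℝ × ℝ, g (euclNorm k) / (-Complex.I * (k.1 : ℂ) + (k.2 : ℂ)) ^ 2 = 0 := by
  set F : ℝ × ℝ → ℂ := fun k => g (euclNorm k) / (-Complex.I * (k.1 : ℂ) + (k.2 : ℂ)) ^ 2
    with hF
  have hcomp : ∫ k : ℝ × ℝ, F (rotEquiv k) = ∫ k, F k :=
    rot_measurePreserving.integral_comp rotEquiv.measurableEmbedding F
  have hneg : ∀ k : ℝ × ℝ, F (rotEquiv k) = -F k := by
    intro k
    show F (k.2, -k.1) = -F k
    rw [hF]
    have hnorm : euclNorm (k.2, -k.1) = euclNorm k := by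
      simp only [euclNorm]
      ring_nf
    have hph : (-Complex.I * ((k.2 : ℝ) : ℂ) + ((-k.1 : ℝ) : ℂ)) ^ 2
        = -(-Complex.I * (k.1 : ℂ) + (k.2 : ℂ)) ^ 2 := by
      push_cast
      ring_nf
      rw [Complex.I_sq]
      ring
    simp only [hnorm, hph, div_neg]
  have key : ∫ k : ℝ × ℝ, F k = -∫ k : ℝ × ℝ, F k := by
    have h2 : ∫ k : ℝ × ℝ, F (rotEquiv k) = ∫ k : ℝ × ℝ, -F k := by simp only [hneg]
    rw [← integral_neg, ← h2]; exact hcomp.symm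
  exact add_self_eq_zero.mp (by linear_combination key)
end

section
/- Let g : [0,∞) → ℂ be measurable and suppose that the function k ↦ g(|k|) is Lebesgue integrable on ℝ², where |k| denotes the Euclidean norm of k = (k₀,k₁). Then ∫_{ℝ²} g(|k|) · k₀/(−i k₀ + k₁) dk = (i/2) ∫_{ℝ²} g(|k|) dk and ∫_{ℝ²} g(|k|) · k₁/(−i k₀ + k₁) dk = (1/2) ∫_{ℝ²} g(|k|) dk. In particular ∫_{ℝ²} g(|k|)·(−i k₀)/(−i k₀ + k₁) dk = ∫_{ℝ²} g(|k|)·k₁/(−i k₀ + k₁) dk. -/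
/-!
Write `φ k = -i k₀ / (-i k₀ + k₁)` and `ψ k = k₁ / (-i k₀ + k₁)`. Then `φ + ψ = 1` away from the
origin, and the quarter turn `(k₀, k₁) ↦ (-k₁, k₀)`, which preserves Lebesgue measure and `|k|`,
carries `φ` to `ψ`. Against a radial weight the two integrals are therefore equal and add up to
the integral of the weight, so each is half of it; `k₀ / (-i k₀ + k₁) = i φ` gives the value `i/2`.
-/

open MeasureTheory

open Complex

namespace RadialAngularAverage

noncomputable def chiralDenom (k : ℝ × ℝ) : ℂ := -I * k.1 + k.2

lemma measurable_chiralDenom : Measurable chiralDenom := by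
  unfold chiralDenom; fun_prop

lemma norm_chiralDenom (k : ℝ × ℝ) : ‖chiralDenom k‖ = euclNorm k := by
  rw [Complex.norm_def, Complex.normSq_apply, euclNorm]
  simp only [chiralDenom, add_re, add_im, mul_re, mul_im, neg_re, neg_im, I_re, I_im, ofReal_re,
    ofReal_im]
  ring_nf

lemma chiralDenom_ne_zero {k : ℝ × ℝ} (hk : k ≠ 0) : chiralDenom k ≠ 0 := by
  contrapose! hk
  have hre := congrArg Complex.re hk
  have him := congrArg Complex.im hk
  simp only [chiralDenom, add_re, add_im, mul_re, mul_im, neg_re, neg_im, I_re, I_im, ofReal_re,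
    ofReal_im, zero_re, zero_im] at hre him
  ext <;> simp <;> linarith

lemma abs_fst_le_euclNorm (k : ℝ × ℝ) : |k.1| ≤ euclNorm k :=
  Real.abs_le_sqrt (by nlinarith [sq_nonneg k.2])

lemma abs_snd_le_euclNorm (k : ℝ × ℝ) : |k.2| ≤ euclNorm k :=
  Real.abs_le_sqrt (by nlinarith [sq_nonneg k.1])

lemma norm_div_chiralDenom_le_one {k : ℝ × ℝ} {z : ℂ} (hz : ‖z‖ ≤ euclNorm k) :
    ‖z / chiralDenom k‖ ≤ 1 := by
  rw [norm_div, norm_chiralDenom]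
  exact div_le_one_of_le₀ hz (Real.sqrt_nonneg _)

lemma integrable_mul_div_chiralDenom {f a : ℝ × ℝ → ℂ} (hf : Integrable f) (ha : Measurable a)
    (ha_le : ∀ k, ‖a k‖ ≤ euclNorm k) :
    Integrable fun k => f k * (a k / chiralDenom k) :=
  hf.mul_bdd (ha.div measurable_chiralDenom).aestronglyMeasurable
    (.of_forall fun k => norm_div_chiralDenom_le_one (ha_le k))

noncomputable def rotQuarter : ℝ × ℝ ≃ᵐ ℝ × ℝ :=
  MeasurableEquiv.prodComm.trans ((MeasurableEquiv.neg ℝ).prodCongr (MeasurableEquiv.refl ℝ))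

@[simp]
lemma rotQuarter_apply (k : ℝ × ℝ) : rotQuarter k = (-k.2, k.1) := rfl

lemma measurePreserving_rotQuarter : MeasurePreserving rotQuarter volume volume :=
  ((Measure.measurePreserving_neg volume).prod (MeasurePreserving.id volume)).comp
    Measure.measurePreserving_swap

lemma euclNorm_rotQuarter (k : ℝ × ℝ) : euclNorm (rotQuarter k) = euclNorm k := by
  simp only [euclNorm, rotQuarter_apply, neg_sq, add_comm]

lemma neg_I_mul_fst_div_chiralDenom_rotQuarter (k : ℝ × ℝ) :
    -I * (rotQuarter k).1 / chiralDenom (rotQuarter k) = k.2 / chiralDenom k := by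
  have hI : chiralDenom (rotQuarter k) = I * chiralDenom k := by
    simp only [chiralDenom, rotQuarter_apply, ofReal_neg]
    linear_combination (k.1 : ℂ) * I_sq
  rw [hI, rotQuarter_apply, ofReal_neg, show -I * -(k.2 : ℂ) = I * k.2 by ring]
  exact mul_div_mul_left _ _ I_ne_zero

section Invariant

variable {f : ℝ × ℝ → ℂ}

lemma integral_mul_neg_I_mul_fst_div_chiralDenom_of_invariant
    (hf_rot : ∀ k, f (rotQuarter k) = f k) :
    ∫ k, f k * (-I * k.1 / chiralDenom k) = ∫ k, f k * (k.2 / chiralDenom k) := by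
  rw [← measurePreserving_rotQuarter.integral_comp']
  simp only [hf_rot, neg_I_mul_fst_div_chiralDenom_rotQuarter]

lemma integral_mul_neg_I_mul_fst_div_chiralDenom_add_snd (hf : Integrable f) :
    (∫ k, f k * (-I * k.1 / chiralDenom k)) + ∫ k, f k * (k.2 / chiralDenom k) = ∫ k, f k := by
  have hφ := integrable_mul_div_chiralDenom (a := fun k => -I * k.1) hf (by fun_prop) fun k => by
    simpa using abs_fst_le_euclNorm k
  have hψ := integrable_mul_div_chiralDenom (a := fun k => (k.2 : ℂ)) hf (by fun_prop) fun k => by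
    simpa using abs_snd_le_euclNorm k
  rw [← integral_add hφ hψ]
  refine integral_congr_ae ?_
  filter_upwards [Measure.ae_ne volume (0 : ℝ × ℝ)] with k hk
  rw [← mul_add, ← add_div, ← chiralDenom, div_self (chiralDenom_ne_zero hk), mul_one]

lemma integral_mul_snd_div_chiralDenom_of_invariant (hf : Integrable f)
    (hf_rot : ∀ k, f (rotQuarter k) = f k) :
    ∫ k, f k * (k.2 / chiralDenom k) = (1 / 2 : ℂ) * ∫ k, f k := by
  rw [← integral_mul_neg_I_mul_fst_div_chiralDenom_add_snd hf,
    integral_mul_neg_I_mul_fst_div_chiralDenom_of_invariant hf_rot]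
  ring

lemma integral_mul_fst_div_chiralDenom_of_invariant (hf : Integrable f)
    (hf_rot : ∀ k, f (rotQuarter k) = f k) :
    ∫ k, f k * (k.1 / chiralDenom k) = (I / 2) * ∫ k, f k := by
  have hφ : ∫ k, f k * (-I * k.1 / chiralDenom k) = -I * ∫ k, f k * (k.1 / chiralDenom k) := by
    rw [← integral_const_mul]
    congr 1 with k
    ring
  have h := integral_mul_neg_I_mul_fst_div_chiralDenom_of_invariant hf_rot
  rw [integral_mul_snd_div_chiralDenom_of_invariant hf hf_rot, hφ] at h
  linear_combination I * h + (∫ k, f k * (k.1 / chiralDenom k)) * I_sq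

end Invariant

end RadialAngularAverage

open RadialAngularAverage in
theorem radial_angular_averages_general
    (g : ℝ → ℂ)
    (hint : Integrable (fun k : ℝ × ℝ => g (euclNorm k))) :
    (∫ k : ℝ × ℝ, g (euclNorm k) * ((k.1 : ℂ) / (-Complex.I * (k.1 : ℂ) + (k.2 : ℂ))) =
        (Complex.I / 2) * ∫ k : ℝ × ℝ, g (euclNorm k)) ∧
    (∫ k : ℝ × ℝ, g (euclNorm k) * ((k.2 : ℂ) / (-Complex.I * (k.1 : ℂ) + (k.2 : ℂ))) =
        (1 / 2 : ℂ) * ∫ k : ℝ × ℝ, g (euclNorm k)) ∧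
    (∫ k : ℝ × ℝ, g (euclNorm k) *
          ((-Complex.I * (k.1 : ℂ)) / (-Complex.I * (k.1 : ℂ) + (k.2 : ℂ))) =
        ∫ k : ℝ × ℝ, g (euclNorm k) * ((k.2 : ℂ) / (-Complex.I * (k.1 : ℂ) + (k.2 : ℂ)))) := by
  have hrot (k : ℝ × ℝ) : g (euclNorm (rotQuarter k)) = g (euclNorm k) := by
    rw [euclNorm_rotQuarter]
  exact ⟨integral_mul_fst_div_chiralDenom_of_invariant hint hrot,
    integral_mul_snd_div_chiralDenom_of_invariant hint hrot,
    integral_mul_neg_I_mul_fst_div_chiralDenom_of_invariant hrot⟩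

/-- Angular-average identities for radial weights against the chiral symbol `1/(−ik₀+k₁)`:
the averages of `k₀/(−ik₀+k₁)` and `k₁/(−ik₀+k₁)` are `i/2` and `1/2` respectively, and in
particular the integrals of `g(|k|)(−ik₀)/(−ik₀+k₁)` and `g(|k|)k₁/(−ik₀+k₁)` coincide. -/
theorem radial_angular_averages
    (g : ℝ → ℂ) (hg : Measurable g)
    (hint : Integrable (fun k : ℝ × ℝ => g (euclNorm k))) :
    (∫ k : ℝ × ℝ, g (euclNorm k) * ((k.1 : ℂ) / (-Complex.I * (k.1 : ℂ) + (k.2 : ℂ))) =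
        (Complex.I / 2) * ∫ k : ℝ × ℝ, g (euclNorm k)) ∧
    (∫ k : ℝ × ℝ, g (euclNorm k) * ((k.2 : ℂ) / (-Complex.I * (k.1 : ℂ) + (k.2 : ℂ))) =
        (1 / 2 : ℂ) * ∫ k : ℝ × ℝ, g (euclNorm k)) ∧
    (∫ k : ℝ × ℝ, g (euclNorm k) *
          ((-Complex.I * (k.1 : ℂ)) / (-Complex.I * (k.1 : ℂ) + (k.2 : ℂ))) =
        ∫ k : ℝ × ℝ, g (euclNorm k) * ((k.2 : ℂ) / (-Complex.I * (k.1 : ℂ) + (k.2 : ℂ)))) :=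
  radial_angular_averages_general g hint
end

section
/- Let n ∈ ℕ, let Λ be a real symmetric n×n matrix, and let Z, v : Fin n → ℝ with Z_ω ≠ 0 and v_ω ≠ 0 for all ω. Set B := diag(1/(4π|v_ω|)), Λ_Z := diag(Z)⁻¹ · Λ · diag(Z), and C := diag(1/(2π|v_ω| Z_ω²)), and assume that the matrices 1 + B Λ_Z and 1 − B Λ_Z are invertible. Define the discontinuity matrix 𝒜 := (1 + B Λ_Z)⁻¹ (1 − B Λ_Z)⁻¹ C, and the vectors Z⁰ := (1 − Λ_Zᵀ B)·Z and Z¹ := (1 + Λ_Zᵀ B)·(vZ), where (vZ)_ω := v_ω Z_ω. Then the bilinear pairing satisfies ⟨Z⁰, 𝒜 Z¹⟩ := Σ_{ω,ω'} Z⁰_ω 𝒜_{ω,ω'} Z¹_{ω'} = Σ_ω sgn(v_ω)/(2π). -/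
open Matrix

/-- Universality of the edge conductance: the algebraic cancellation between the
discontinuity matrix `𝒜` of the multi-channel Luttinger model density-density
correlation and the vertex renormalizations `Z⁰`, `Z¹` determined by Ward identities,
yielding the quantized value `Σ_ω sgn(v_ω)/(2π)`. -/
theorem edge_conductance_cancellation (n : ℕ)
    (Λ : Matrix (Fin n) (Fin n) ℝ) (hΛ : Λ.IsSymm)
    (Z v : Fin n → ℝ) (hZ : ∀ ω, Z ω ≠ 0) (hv : ∀ ω, v ω ≠ 0)
    (B ΛZ C : Matrix (Fin n) (Fin n) ℝ)
    (hB : B = Matrix.diagonal fun ω => (4 * Real.pi * |v ω|)⁻¹)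
    (hΛZ : ΛZ = (Matrix.diagonal Z)⁻¹ * Λ * Matrix.diagonal Z)
    (hC : C = Matrix.diagonal fun ω => (2 * Real.pi * |v ω| * Z ω ^ 2)⁻¹)
    (h1 : IsUnit (1 + B * ΛZ)) (h2 : IsUnit (1 - B * ΛZ))
    (𝒜 : Matrix (Fin n) (Fin n) ℝ)
    (h𝒜 : 𝒜 = (1 + B * ΛZ)⁻¹ * (1 - B * ΛZ)⁻¹ * C)
    (Z0 Z1 : Fin n → ℝ)
    (hZ0 : Z0 = (1 - ΛZᵀ * B).mulVec Z)
    (hZ1 : Z1 = (1 + ΛZᵀ * B).mulVec fun ω => v ω * Z ω) :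
    ∑ ω, ∑ ω', Z0 ω * 𝒜 ω ω' * Z1 ω' = ∑ ω, Real.sign (v ω) / (2 * Real.pi) := by
  have hπ : Real.pi ≠ 0 := Real.pi_ne_zero
  set X := B * ΛZ with hX
  have hd1 : IsUnit (1 + X).det := (Matrix.isUnit_iff_isUnit_det _).mp h1
  have hd2 : IsUnit (1 - X).det := (Matrix.isUnit_iff_isUnit_det _).mp h2
  -- (1 - X) commutes with (1 + X)⁻¹
  have hcomm : (1 - X) * (1 + X)⁻¹ = (1 + X)⁻¹ * (1 - X) := by
    have hc : (1 - X) * (1 + X) = (1 + X) * (1 - X) := by noncomm_ring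
    have e : (1 + X)⁻¹ * ((1 - X) * (1 + X)) * (1 + X)⁻¹
        = (1 + X)⁻¹ * ((1 + X) * (1 - X)) * (1 + X)⁻¹ := by rw [hc]
    have l : (1 + X)⁻¹ * ((1 - X) * (1 + X)) * (1 + X)⁻¹ = (1 + X)⁻¹ * (1 - X) := by
      rw [show (1 + X)⁻¹ * ((1 - X) * (1 + X)) * (1 + X)⁻¹
          = (1 + X)⁻¹ * (1 - X) * ((1 + X) * (1 + X)⁻¹) by noncomm_ring,
        Matrix.mul_nonsing_inv _ hd1, mul_one]
    have r : (1 + X)⁻¹ * ((1 + X) * (1 - X)) * (1 + X)⁻¹ = (1 - X) * (1 + X)⁻¹ := by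
      rw [show (1 + X)⁻¹ * ((1 + X) * (1 - X)) * (1 + X)⁻¹
          = ((1 + X)⁻¹ * (1 + X)) * ((1 - X) * (1 + X)⁻¹) by noncomm_ring,
        Matrix.nonsing_inv_mul _ hd1, one_mul]
    rw [← r, ← e, l]
  -- diagonal inverse
  have hDinv : (Matrix.diagonal Z)⁻¹ = Matrix.diagonal fun ω => (Z ω)⁻¹ := by
    refine Matrix.inv_eq_right_inv ?_
    rw [Matrix.diagonal_mul_diagonal]
    have : (fun i => Z i * (Z i)⁻¹) = fun _ => (1 : ℝ) :=
      funext fun ω => mul_inv_cancel₀ (hZ ω)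
    rw [this, Matrix.diagonal_one]
  -- B is symmetric (diagonal)
  have hBsymm : Bᵀ = B := by rw [hB, Matrix.diagonal_transpose]
  -- key identity: C * (ΛZᵀ * B) = (B * ΛZ) * C
  have hkey : C * (ΛZᵀ * B) = B * ΛZ * C := by
    have hΛZT : ΛZᵀ = Matrix.diagonal Z * Λ * Matrix.diagonal fun ω => (Z ω)⁻¹ := by
      rw [hΛZ, hDinv, Matrix.transpose_mul, Matrix.transpose_mul,
        Matrix.diagonal_transpose, Matrix.diagonal_transpose, hΛ.eq, Matrix.mul_assoc]
    ext i j
    rw [hΛZT, hΛZ, hDinv, hB, hC]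
    simp only [Matrix.mul_assoc, Matrix.diagonal_mul_diagonal, Matrix.diagonal_mul,
      Matrix.mul_diagonal]
    have hai : |v i| ≠ 0 := abs_ne_zero.mpr (hv i)
    have haj : |v j| ≠ 0 := abs_ne_zero.mpr (hv j)
    have hZi := hZ i; have hZj := hZ j
    field_simp
  -- (1 - X) * 𝒜 * (1 + ΛZᵀ * B) = C
  have hcollapse : (1 - X) * 𝒜 * (1 + ΛZᵀ * B) = C := by
    have hCmul : C * (1 + ΛZᵀ * B) = (1 + X) * C := by
      rw [mul_add, mul_one, hkey, add_mul, one_mul, hX]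
    calc (1 - X) * 𝒜 * (1 + ΛZᵀ * B)
        = (1 - X) * (1 + X)⁻¹ * ((1 - X)⁻¹ * (C * (1 + ΛZᵀ * B))) := by
          rw [h𝒜]; noncomm_ring
      _ = (1 + X)⁻¹ * ((1 - X) * (1 - X)⁻¹) * ((1 + X) * C) := by
          rw [hcomm, hCmul]; noncomm_ring
      _ = C := by
          rw [Matrix.mul_nonsing_inv _ hd2, mul_one, ← mul_assoc,
            Matrix.nonsing_inv_mul _ hd1, one_mul]
  -- rewrite the double sum as a dot product
  have hNT : (1 - ΛZᵀ * B)ᵀ = 1 - X := by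
    rw [Matrix.transpose_sub, Matrix.transpose_one, Matrix.transpose_mul, hBsymm,
      Matrix.transpose_transpose, hX]
  have hsum : ∑ ω, ∑ ω', Z0 ω * 𝒜 ω ω' * Z1 ω'
      = Z ⬝ᵥ C.mulVec (fun ω => v ω * Z ω) := by
    have e1 : ∑ ω, ∑ ω', Z0 ω * 𝒜 ω ω' * Z1 ω' = Z0 ⬝ᵥ 𝒜.mulVec Z1 := by
      simp [dotProduct, Matrix.mulVec, Finset.mul_sum, mul_assoc]
    rw [e1, hZ0, hZ1]
    calc ((1 - ΛZᵀ * B).mulVec Z) ⬝ᵥ 𝒜.mulVec ((1 + ΛZᵀ * B).mulVec fun ω => v ω * Z ω)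
        = (Z ᵥ* (1 - ΛZᵀ * B)ᵀ) ⬝ᵥ ((𝒜 * (1 + ΛZᵀ * B)).mulVec fun ω => v ω * Z ω) := by
          rw [Matrix.mulVec_mulVec, ← Matrix.vecMul_transpose]
      _ = (Z ᵥ* ((1 - ΛZᵀ * B)ᵀ * (𝒜 * (1 + ΛZᵀ * B)))) ⬝ᵥ (fun ω => v ω * Z ω) := by
          rw [Matrix.dotProduct_mulVec, Matrix.vecMul_vecMul]
      _ = Z ⬝ᵥ C.mulVec (fun ω => v ω * Z ω) := by
          rw [← Matrix.dotProduct_mulVec, hNT, ← Matrix.mul_assoc, hcollapse]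
  rw [hsum, hC]
  simp only [dotProduct, Matrix.mulVec_diagonal]
  refine Finset.sum_congr rfl fun ω _ => ?_
  have hZω := hZ ω
  have h2π : (2 : ℝ) * Real.pi ≠ 0 := by positivity
  rcases (hv ω).lt_or_gt with hneg | hpos
  · rw [Real.sign_of_neg hneg, abs_of_neg hneg, eq_div_iff h2π]
    have hv' : v ω ≠ 0 := hneg.ne
    field_simp
  · rw [Real.sign_of_pos hpos, abs_of_pos hpos, eq_div_iff h2π]
    have hv' : v ω ≠ 0 := hpos.ne'
    field_simp
end

section
/- Let n ≥ 1, let H, A, B be n×n complex matrices, let β > 0, T > 0, and let η ∈ ℝ be such that β·η ∈ 2πℤ. For z ∈ ℂ define A(z) := exp(izH)·A·exp(−izH) (matrix exponentials). Then ∫_{−T}^{0} e^{ηt} · Tr( exp(−βH) · (A(t)B − B A(t)) ) dt = i ∫_{0}^{β} e^{−iηs} · Tr( exp(−βH) · A(−is) · B ) ds − i e^{−ηT} ∫_{0}^{β} e^{−iηs} · Tr( exp(−βH) · A(−T−is) · B ) ds. -/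
open Matrix MeasureTheory intervalIntegral

/-- The complex-time Heisenberg evolution `A(z) = exp(izH) A exp(−izH)` of a matrix. -/
noncomputable def heisenberg {n : ℕ} (H A : Matrix (Fin n) (Fin n) ℂ) (z : ℂ) :
    Matrix (Fin n) (Fin n) ℂ :=
  NormedSpace.exp ((Complex.I * z) • H) * A * NormedSpace.exp ((-(Complex.I * z)) • H)

/-!
The function `g z = e^{ηz} Tr(e^{−βH} A(z) B)` is entire. Cyclicity of the trace gives the
KMS identity `Tr(e^{−βH} A(t − iβ) B) = Tr(e^{−βH} B A(t))`, and `e^{−iηβ} = 1`, so the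
integrand on the left is `g t − g (t − iβ)`. Cauchy's theorem on the rectangle with vertices
`0, −iβ, −T − iβ, −T` turns the difference of the two horizontal integrals into the two
vertical ones.
-/

open Complex

/-- Cauchy's theorem on the rectangle with vertices `a, b, b - ic, a - ic`, solved for the
difference of its horizontal sides. -/
theorem integral_sub_integral_sub_mul_I_of_differentiable {E : Type*} [NormedAddCommGroup E]
    [NormedSpace ℂ E] [CompleteSpace E] {f : ℂ → E} (hf : Differentiable ℂ f) (a b c : ℝ) :
    (∫ t in a..b, f t) - (∫ t in a..b, f (t - c * I)) =
      I • (∫ s in (0 : ℝ)..c, f (b - I * s)) - I • (∫ s in (0 : ℝ)..c, f (a - I * s)) := by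
  have hrect := integral_boundary_rect_eq_zero_of_differentiableOn f a (b - c * I)
    hf.differentiableOn
  have hvert : ∀ x : ℝ,
      (∫ y in (0 : ℝ)..-c, f (x + y * I)) = -∫ s in (0 : ℝ)..c, f (x - I * s) := by
    intro x
    have h := integral_comp_neg (a := 0) (b := c) fun y : ℝ => f (x + y * I)
    rw [neg_zero] at h
    rw [integral_symm, ← h]
    simp only [ofReal_neg, neg_mul, ← sub_eq_add_neg, mul_comm I]
  simp only [ofReal_re, ofReal_im, sub_re, sub_im, mul_I_re, mul_I_im, ofReal_zero, zero_sub,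
    neg_zero, sub_zero, zero_mul, add_zero, ofReal_neg, neg_mul, ← sub_eq_add_neg, hvert,
    smul_neg] at hrect
  rw [← sub_eq_zero, ← hrect]
  abel

theorem Matrix.exp_add_smul {m : Type*} [Fintype m] [DecidableEq m] (H : Matrix m m ℂ)
    (x y : ℂ) :
    NormedSpace.exp ((x + y) • H) = NormedSpace.exp (x • H) * NormedSpace.exp (y • H) := by
  rw [add_smul]
  exact exp_add_of_commute _ _ (((Commute.refl H).smul_left x).smul_right y)

theorem exp_mul_sub_mul_I_of_mul_eq {β η : ℝ} {m : ℤ} (h : β * η = 2 * Real.pi * m) (z : ℂ) :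
    cexp (η * (z - β * I)) = cexp (η * z) := by
  have hβη : (η : ℂ) * (β * I) = m * (2 * Real.pi * I) := by
    rw [← mul_assoc, mul_comm (η : ℂ), ← ofReal_mul, h]
    push_cast
    ring
  rw [mul_sub, sub_eq_add_neg, exp_add, hβη, ← neg_mul, ← Int.cast_neg, exp_int_mul_two_pi_mul_I,
    mul_one]

variable {n : ℕ}

theorem heisenberg_add (H A : Matrix (Fin n) (Fin n) ℂ) (z w : ℂ) :
    heisenberg H A (z + w) =
      NormedSpace.exp ((I * w) • H) * heisenberg H A z * NormedSpace.exp ((-(I * w)) • H) := by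
  rw [heisenberg, heisenberg, show I * (z + w) = I * w + I * z by ring]
  simp only [neg_add_rev, Matrix.exp_add_smul, mul_assoc]

/-- Not divided by the partition function `Tr e^{−βH}`. -/
noncomputable def thermalCorrelation (H A B : Matrix (Fin n) (Fin n) ℂ) (β z : ℂ) : ℂ :=
  (NormedSpace.exp ((-β) • H) * heisenberg H A z * B).trace

section
attribute [local instance] Matrix.linftyOpNormedRing Matrix.linftyOpNormedAlgebra

theorem differentiable_thermalCorrelation (H A B : Matrix (Fin n) (Fin n) ℂ) (β : ℂ) :
    Differentiable ℂ (thermalCorrelation H A B β) := by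
  have hexp : ∀ c : ℂ, Differentiable ℂ fun z : ℂ => NormedSpace.exp ((c * z) • H) := fun c z =>
    (hasDerivAt_exp_smul_const H (c * z)).differentiableAt.comp z
      (differentiableAt_id.const_mul c)
  have hexp_neg : Differentiable ℂ fun z : ℂ => NormedSpace.exp ((-(I * z)) • H) := by
    simpa only [neg_mul] using hexp (-I)
  have hexp_pos := hexp I
  have hmat : Differentiable ℂ fun z => NormedSpace.exp ((-β) • H) * heisenberg H A z * B := by
    unfold heisenberg
    fun_prop
  exact (traceLinearMap (Fin n) ℂ ℂ).toContinuousLinearMap.differentiable.comp hmat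

end

theorem thermalCorrelation_sub_mul_I (H A B : Matrix (Fin n) (Fin n) ℂ) (β z : ℂ) :
    thermalCorrelation H A B β (z - β * I) =
      (NormedSpace.exp ((-β) • H) * (B * heisenberg H A z)).trace := by
  have hshift : heisenberg H A (z - β * I) =
      NormedSpace.exp (β • H) * heisenberg H A z * NormedSpace.exp ((-β) • H) := by
    rw [sub_eq_add_neg, heisenberg_add, show I * -(β * I) = β by linear_combination (-β) * I_sq]
  have hinv : NormedSpace.exp ((-β) • H) * NormedSpace.exp (β • H) = 1 := by
    rw [← Matrix.exp_add_smul, neg_add_cancel, zero_smul, NormedSpace.exp_zero]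
  calc thermalCorrelation H A B β (z - β * I)
      = (NormedSpace.exp ((-β) • H) * NormedSpace.exp (β • H) * heisenberg H A z *
          NormedSpace.exp ((-β) • H) * B).trace := by
        simp only [thermalCorrelation, hshift, mul_assoc]
    _ = (heisenberg H A z * NormedSpace.exp ((-β) • H) * B).trace := by
        rw [hinv, one_mul, mul_assoc (heisenberg H A z)]
    _ = (NormedSpace.exp ((-β) • H) * (B * heisenberg H A z)).trace := by
        rw [trace_mul_cycle, trace_mul_comm]

theorem wick_rotation_identity_general (n : ℕ)
    (H A B : Matrix (Fin n) (Fin n) ℂ)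
    (β T : ℝ)
    (η : ℝ) (hη : ∃ m : ℤ, β * η = 2 * Real.pi * m) :
    (∫ t in (-T)..(0 : ℝ), ((Real.exp (η * t) : ℝ) : ℂ) *
        (NormedSpace.exp ((-(β : ℂ)) • H) *
          (heisenberg H A (t : ℂ) * B - B * heisenberg H A (t : ℂ))).trace) =
      Complex.I * (∫ s in (0 : ℝ)..β, Complex.exp (-Complex.I * η * s) *
          (NormedSpace.exp ((-(β : ℂ)) • H) *
            heisenberg H A (-Complex.I * s) * B).trace)
      - Complex.I * ((Real.exp (-(η * T)) : ℝ) : ℂ) *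
          (∫ s in (0 : ℝ)..β, Complex.exp (-Complex.I * η * s) *
            (NormedSpace.exp ((-(β : ℂ)) • H) *
              heisenberg H A ((-T : ℂ) - Complex.I * s) * B).trace) := by
  obtain ⟨m, hm⟩ := hη
  set g : ℂ → ℂ := fun z => cexp (η * z) * thermalCorrelation H A B β z with hg_def
  have hg : Differentiable ℂ g :=
    (differentiable_id.const_mul _).cexp.mul (differentiable_thermalCorrelation H A B β)
  have hreal : ∀ t : ℝ, ((Real.exp (η * t) : ℝ) : ℂ) *
      (NormedSpace.exp ((-(β : ℂ)) • H) * (heisenberg H A t * B - B * heisenberg H A t)).trace =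
        g t - g (t - β * I) := by
    intro t
    simp only [hg_def]
    rw [thermalCorrelation_sub_mul_I, exp_mul_sub_mul_I_of_mul_eq hm, ← mul_sub, ofReal_exp,
      ofReal_mul, thermalCorrelation, mul_sub, trace_sub, mul_assoc]
  have himag : ∀ x s : ℝ, g (x - I * s) = cexp (η * x) * (cexp (-I * η * s) *
      (NormedSpace.exp ((-(β : ℂ)) • H) * heisenberg H A (x - I * s) * B).trace) := by
    intro x s
    simp only [hg_def, thermalCorrelation, ← mul_assoc, ← Complex.exp_add]
    ring_nf
  calc _ = ∫ t in (-T)..(0 : ℝ), (g t - g (t - β * I)) := integral_congr fun t _ ↦ hreal t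
    _ = (∫ t in (-T)..(0 : ℝ), g t) - ∫ t in (-T)..(0 : ℝ), g (t - β * I) :=
        integral_sub ((hg.continuous.comp continuous_ofReal).intervalIntegrable _ _)
          ((hg.continuous.comp (continuous_ofReal.sub continuous_const)).intervalIntegrable _ _)
    _ = I * (∫ s in (0 : ℝ)..β, g ((0 : ℝ) - I * s)) -
          I * ∫ s in (0 : ℝ)..β, g ((-T : ℝ) - I * s) :=
        integral_sub_integral_sub_mul_I_of_differentiable hg (-T) 0 β
    _ = _ := by
        simp only [himag, intervalIntegral.integral_const_mul]
        push_cast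
        simp only [zero_sub, mul_zero, Complex.exp_zero, one_mul, mul_neg, neg_mul, mul_assoc]

/-- Wick rotation for finite-dimensional quantum systems: if `β·η ∈ 2πℤ`, the real-time
response integral of the commutator against `e^{ηt}` over `[−T,0]` equals the
imaginary-time (Euclidean) correlation integral plus an explicit boundary term at real
time `−T`. -/
theorem wick_rotation_identity (n : ℕ) (hn : 1 ≤ n)
    (H A B : Matrix (Fin n) (Fin n) ℂ)
    (β T : ℝ) (hβ : 0 < β) (hT : 0 < T)
    (η : ℝ) (hη : ∃ m : ℤ, β * η = 2 * Real.pi * m) :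
    (∫ t in (-T)..(0 : ℝ), ((Real.exp (η * t) : ℝ) : ℂ) *
        (NormedSpace.exp ((-(β : ℂ)) • H) *
          (heisenberg H A (t : ℂ) * B - B * heisenberg H A (t : ℂ))).trace) =
      Complex.I * (∫ s in (0 : ℝ)..β, Complex.exp (-Complex.I * η * s) *
          (NormedSpace.exp ((-(β : ℂ)) • H) *
            heisenberg H A (-Complex.I * s) * B).trace)
      - Complex.I * ((Real.exp (-(η * T)) : ℝ) : ℂ) *
          (∫ s in (0 : ℝ)..β, Complex.exp (-Complex.I * η * s) *
            (NormedSpace.exp ((-(β : ℂ)) • H) *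
              heisenberg H A ((-T : ℂ) - Complex.I * s) * B).trace) :=
  wick_rotation_identity_general n H A B β T η hη
end
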